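/- (Correctness of the fuzzing engine's violation check.) For every quantitative STL formula Φ over S, every trace π : ℕ → S, and every formula ξ ∈ Θ(Φ): if ρ(ξ,π,0) > 0 then it is not the case that (π,0) ⊨ Φ. That is, a strictly positive robustness score for any member of Θ(Φ) certifies that the trace violates the traffic law Φ. -/

import Mathlib

/-- Quantitative STL formulas over a type `S` of scenes: atoms carry a
real-valued function, and the bounded temporal operators carry bounds
`a b : ℕ` together with a proof that `a ≤ b`. -/
inductive QSTL (S : Type) : Type where
  | atom : (S → ℝ) → QSTL S
  | neg : QSTL S → QSTL S
  | conj : QSTL S → QSTL S → QSTL S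
  | disj : QSTL S → QSTL S → QSTL S
  | untl : (a b : ℕ) → a ≤ b → QSTL S → QSTL S → QSTL S
  | always : (a b : ℕ) → a ≤ b → QSTL S → QSTL S
  | eventually : (a b : ℕ) → a ≤ b → QSTL S → QSTL S
  | next : QSTL S → QSTL S

/-- Satisfaction `(π, t) ⊨ φ`. -/
def QSTL.Sat {S : Type} (π : ℕ → S) : ℕ → QSTL S → Prop
  | t, .atom g => g (π t) > 0
  | t, .neg φ => ¬ QSTL.Sat π t φ
  | t, .conj φ ψ => QSTL.Sat π t φ ∧ QSTL.Sat π t ψ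
  | t, .disj φ ψ => QSTL.Sat π t φ ∨ QSTL.Sat π t ψ
  | t, .untl a b _ φ ψ =>
      ∃ t', t + a ≤ t' ∧ t' ≤ t + b ∧ QSTL.Sat π t' ψ ∧
        ∀ t'', t ≤ t'' → t'' ≤ t' → QSTL.Sat π t'' φ
  | t, .always a b _ φ => ∀ t', t + a ≤ t' → t' ≤ t + b → QSTL.Sat π t' φ
  | t, .eventually a b _ φ => ∃ t', t + a ≤ t' ∧ t' ≤ t + b ∧ QSTL.Sat π t' φ
  | t, .next φ => QSTL.Sat π (t + 1) φ

/-- The robustness `ρ(φ, π, t)` of the quantitative semantics. -/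
def QSTL.rho {S : Type} (π : ℕ → S) : QSTL S → ℕ → ℝ
  | .atom g, t => g (π t)
  | .neg φ, t => - QSTL.rho π φ t
  | .conj φ ψ, t => min (QSTL.rho π φ t) (QSTL.rho π ψ t)
  | .disj φ ψ, t => max (QSTL.rho π φ t) (QSTL.rho π ψ t)
  | .untl a b h φ ψ, t =>
      (Finset.Icc (t + a) (t + b)).attach.sup'
        (Finset.attach_nonempty_iff.mpr
          (Finset.nonempty_Icc.mpr (Nat.add_le_add_left h t)))
        (fun t' => min (QSTL.rho π ψ t'.1)
          ((Finset.Icc t t'.1).inf'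
            (Finset.nonempty_Icc.mpr
              (le_trans (Nat.le_add_right t a) (Finset.mem_Icc.mp t'.2).1))
            (fun t'' => QSTL.rho π φ t'')))
  | .always a b h φ, t =>
      (Finset.Icc (t + a) (t + b)).inf'
        (Finset.nonempty_Icc.mpr (Nat.add_le_add_left h t))
        (fun t' => QSTL.rho π φ t')
  | .eventually a b h φ, t =>
      (Finset.Icc (t + a) (t + b)).sup'
        (Finset.nonempty_Icc.mpr (Nat.add_le_add_left h t))
        (fun t' => QSTL.rho π φ t')
  | .next φ, t => QSTL.rho π φ (t + 1)

mutual
/-- `Theta Φ`: the set of formulas describing different ways of violating `Φ`.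
(In the until case, `Θ(¬φ₁ ∨ φ₂)` and `Θ(φ₁ ∨ φ₂)` are unfolded via the
defining equations `Θ(¬φ₁ ∨ φ₂) = {x ∧ y : x ∈ N(φ₁), y ∈ Θ(φ₂)}` and
`Θ(φ₁ ∨ φ₂) = {x ∧ y : x ∈ Θ(φ₁), y ∈ Θ(φ₂)}`.) -/
def QSTL.Theta {S : Type} : QSTL S → Set (QSTL S)
  | .atom g => {QSTL.neg (QSTL.atom g)}
  | .conj φ ψ => QSTL.Theta φ ∪ QSTL.Theta ψ
  | .disj φ ψ => {ξ | ∃ x ∈ QSTL.Theta φ, ∃ y ∈ QSTL.Theta ψ, ξ = QSTL.conj x y}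
  | .neg φ => QSTL.NSat φ
  | .untl a b h φ ψ =>
      {ξ | ∃ x ∈ {ζ | ∃ u ∈ QSTL.NSat φ, ∃ v ∈ QSTL.Theta ψ, ζ = QSTL.conj u v},
           ∃ y ∈ {ζ | ∃ u ∈ QSTL.Theta φ, ∃ v ∈ QSTL.Theta ψ, ζ = QSTL.conj u v},
           ξ = QSTL.untl a b h x y}
      ∪ {ξ | ∃ x ∈ QSTL.Theta φ, ∃ y ∈ QSTL.Theta ψ, ξ = QSTL.conj x y}
  | .always a b h φ => {ξ | ∃ x ∈ QSTL.Theta φ, ξ = QSTL.eventually a b h x}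
  | .eventually a b h φ => {ξ | ∃ x ∈ QSTL.Theta φ, ξ = QSTL.always a b h x}
  | .next φ => {ξ | ∃ x ∈ QSTL.Theta φ, ξ = QSTL.next x}

/-- `NSat Φ` (written `N(Φ)` in the paper): the set of formulas describing
different ways of satisfying `Φ`. -/
def QSTL.NSat {S : Type} : QSTL S → Set (QSTL S)
  | .atom g => {QSTL.atom g}
  | .conj φ ψ => {ξ | ∃ x ∈ QSTL.NSat φ, ∃ y ∈ QSTL.NSat ψ, ξ = QSTL.conj x y}
  | .disj φ ψ => QSTL.NSat φ ∪ QSTL.NSat ψ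
  | .neg φ => QSTL.Theta φ
  | .untl a b h φ ψ =>
      {ξ | ∃ x ∈ QSTL.NSat φ, ∃ y ∈ QSTL.NSat ψ, ξ = QSTL.untl a b h x y}
  | .always a b h φ => {ξ | ∃ x ∈ QSTL.NSat φ, ξ = QSTL.always a b h x}
  | .eventually a b h φ => {ξ | ∃ x ∈ QSTL.NSat φ, ξ = QSTL.eventually a b h x}
  | .next φ => {ξ | ∃ x ∈ QSTL.NSat φ, ξ = QSTL.next x}
end

/-! Each member of `NSat Φ` is a strengthening of `Φ` and each member of `Θ Φ` a strengthening of
`¬Φ`, in the sense that positive robustness implies satisfaction. Both statements are proved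
together by structural recursion on `Φ`, since negation swaps `Θ` and `NSat`; on the temporal
operators, positive robustness of a `min`/`max` over a time window unfolds to a `∀`/`∃` over that
window, which matches `Sat` clause by clause. -/

namespace QSTL

variable {S : Type} (π : ℕ → S)

theorem lt_rho_always_iff {a b : ℕ} (hab : a ≤ b) (φ : QSTL S) (t : ℕ) (c : ℝ) :
    c < (always a b hab φ).rho π t ↔ ∀ t', t + a ≤ t' → t' ≤ t + b → c < φ.rho π t' := by
  simp only [rho, Finset.lt_inf'_iff, Finset.mem_Icc, and_imp]

theorem lt_rho_eventually_iff {a b : ℕ} (hab : a ≤ b) (φ : QSTL S) (t : ℕ) (c : ℝ) :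
    c < (eventually a b hab φ).rho π t ↔ ∃ t', t + a ≤ t' ∧ t' ≤ t + b ∧ c < φ.rho π t' := by
  simp only [rho, Finset.lt_sup'_iff, Finset.mem_Icc, and_assoc]

theorem lt_rho_untl_iff {a b : ℕ} (hab : a ≤ b) (φ ψ : QSTL S) (t : ℕ) (c : ℝ) :
    c < (untl a b hab φ ψ).rho π t ↔ ∃ t', t + a ≤ t' ∧ t' ≤ t + b ∧ c < ψ.rho π t' ∧
      ∀ t'', t ≤ t'' → t'' ≤ t' → c < φ.rho π t'' := by
  simp only [rho, Finset.lt_sup'_iff, Finset.mem_attach, true_and, lt_min_iff,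
    Finset.lt_inf'_iff, Finset.mem_Icc, and_imp, Subtype.exists, exists_prop, and_assoc]

mutual

theorem not_sat_of_mem_Theta : ∀ {Φ ξ : QSTL S}, ξ ∈ Φ.Theta → ∀ {t : ℕ}, 0 < ξ.rho π t →
    ¬ Φ.Sat π t
  | atom g, _, rfl, t, h => by
    simp only [rho, Sat, Left.neg_pos_iff] at h ⊢
    exact h.not_gt
  | neg _, _, hξ, _, h => not_not.mpr (sat_of_mem_NSat hξ h)
  | conj _ _, _, .inl hξ, _, h => fun hsat => not_sat_of_mem_Theta hξ h hsat.1
  | conj _ _, _, .inr hξ, _, h => fun hsat => not_sat_of_mem_Theta hξ h hsat.2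
  | disj _ _, _, ⟨_, hx, _, hy, rfl⟩, _, h => by
    rw [rho, lt_min_iff] at h
    rintro (hsat | hsat)
    exacts [not_sat_of_mem_Theta hx h.1 hsat, not_sat_of_mem_Theta hy h.2 hsat]
  | untl a b hab φ ψ, _, .inl ⟨_, ⟨_, hu, _, _, rfl⟩, _, ⟨_, hp, _, _, rfl⟩, rfl⟩, t, h => by
    -- this branch of `Θ` never has positive robustness: at the witness time it asks for
    -- a strengthening of `φ` and one of `¬φ` to hold at once
    obtain ⟨t', hat', -, hpos, hpre⟩ := (lt_rho_untl_iff π hab _ _ t 0).mp h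
    have hu_pos := hpre t' (by omega) le_rfl
    rw [rho, lt_min_iff] at hpos hu_pos
    exact absurd (sat_of_mem_NSat hu hu_pos.1) (not_sat_of_mem_Theta hp hpos.1)
  | untl a _ _ _ _, _, .inr ⟨_, hx, _, _, rfl⟩, t, h => by
    rintro ⟨t', hat', -, -, hpre⟩
    rw [rho, lt_min_iff] at h
    exact not_sat_of_mem_Theta hx h.1 (hpre t le_rfl (by omega))
  | always _ _ hab _, _, ⟨_, hx, rfl⟩, t, h => fun hsat => by
    obtain ⟨t', h₁, h₂, hpos⟩ := (lt_rho_eventually_iff π hab _ t 0).mp h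
    exact not_sat_of_mem_Theta hx hpos (hsat t' h₁ h₂)
  | eventually _ _ hab _, _, ⟨_, hx, rfl⟩, t, h => by
    rintro ⟨t', h₁, h₂, hsat⟩
    exact not_sat_of_mem_Theta hx ((lt_rho_always_iff π hab _ t 0).mp h t' h₁ h₂) hsat
  | next _, _, ⟨_, hx, rfl⟩, _, h => not_sat_of_mem_Theta hx h

theorem sat_of_mem_NSat : ∀ {Φ ξ : QSTL S}, ξ ∈ Φ.NSat → ∀ {t : ℕ}, 0 < ξ.rho π t →
    Φ.Sat π t
  | atom _, _, rfl, _, h => h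
  | neg _, _, hξ, _, h => not_sat_of_mem_Theta hξ h
  | conj _ _, _, ⟨_, hx, _, hy, rfl⟩, _, h => by
    rw [rho, lt_min_iff] at h
    exact ⟨sat_of_mem_NSat hx h.1, sat_of_mem_NSat hy h.2⟩
  | disj _ _, _, .inl hξ, _, h => .inl (sat_of_mem_NSat hξ h)
  | disj _ _, _, .inr hξ, _, h => .inr (sat_of_mem_NSat hξ h)
  | untl _ _ hab _ _, _, ⟨_, hx, _, hy, rfl⟩, t, h => by
    obtain ⟨t', h₁, h₂, hψ, hφ⟩ := (lt_rho_untl_iff π hab _ _ t 0).mp h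
    exact ⟨t', h₁, h₂, sat_of_mem_NSat hy hψ,
      fun t'' h₁' h₂' => sat_of_mem_NSat hx (hφ t'' h₁' h₂')⟩
  | always _ _ hab _, _, ⟨_, hx, rfl⟩, t, h => fun t' h₁ h₂ =>
    sat_of_mem_NSat hx ((lt_rho_always_iff π hab _ t 0).mp h t' h₁ h₂)
  | eventually _ _ hab _, _, ⟨_, hx, rfl⟩, t, h => by
    obtain ⟨t', h₁, h₂, hpos⟩ := (lt_rho_eventually_iff π hab _ t 0).mp h
    exact ⟨t', h₁, h₂, sat_of_mem_NSat hx hpos⟩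
  | next _, _, ⟨_, hx, rfl⟩, _, h => sat_of_mem_NSat hx h

end

end QSTL

/-- Correctness of the fuzzing engine's violation check: a strictly positive
robustness score for any member of `Θ(Φ)` certifies that the trace violates
the traffic law `Φ`. -/
theorem fuzzing_check_correct {S : Type} (Φ : QSTL S) (π : ℕ → S) (ξ : QSTL S)
    (hξ : ξ ∈ QSTL.Theta Φ) (h : QSTL.rho π ξ 0 > 0) : ¬ QSTL.Sat π 0 Φ :=
  QSTL.not_sat_of_mem_Theta π hξ h
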